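/- arXiv:1501.03297 — 7 statements merged into one kernel-verified Lean document; each statement's English description precedes it below -/
import Mathlib

section
/- Let K be a field of characteristic zero and V a vector space over K. For subspaces U₁, U₂ ⊆ ℚ^n one has N_{U₁} + N_{U₂} = N_{U₁ ∩ U₂}, where the left-hand side is the sum of subspaces of V^n. In particular, the sum of two ℚ-linear subspaces of V^n is again a ℚ-linear subspace of V^n. -/
open scoped Pointwise

/-!
Identify `x ∈ V^n` with the `ℚ`-linear map `f_x : ℚ^n → V`, `q ↦ ∑ qᵢ xᵢ`; then `N_U` consists
of the `x` with `U ≤ ker f_x`. If `f` vanishes on `U₁ ∩ U₂`, the partial maps `0` on `U₁` and `f`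
on `U₂` agree on `U₁ ∩ U₂`, so they glue to a map on `U₁ + U₂`, which extends to some `g` on all
of `ℚ^n`. Then `f = g + (f - g)` with `g` vanishing on `U₁` and `f - g` vanishing on `U₂`.
-/

/-- For a `ℚ`-subspace `U ⊆ ℚ^n`, the `ℚ`-linear subspace
`N_U = {x ∈ V^n : q₁x₁ + ⋯ + qₙxₙ = 0 for every q ∈ U}` of `V^n`, where `V` is a
vector space over a field `K` of characteristic zero (so the rational coefficients
are interpreted in `K` via the canonical embedding `ℚ → K`). -/
def ratLinSet (K V : Type*) [Field K] [AddCommGroup V] [Module K V]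
    {n : ℕ} (U : Submodule ℚ (Fin n → ℚ)) : Set (Fin n → V) :=
  {x | ∀ q ∈ U, ∑ i, ((q i : K)) • x i = 0}

theorem LinearMap.exists_le_ker_and_le_ker_sub {K E F : Type*} [DivisionRing K]
    [AddCommGroup E] [Module K E] [AddCommGroup F] [Module K F] {p q : Submodule K E}
    {f : E →ₗ[K] F} (hf : p ⊓ q ≤ ker f) : ∃ g : E →ₗ[K] F, p ≤ ker g ∧ q ≤ ker (f - g) := by
  let φ : E →ₗ.[K] F := ⟨p, 0⟩
  let ψ : E →ₗ.[K] F := ⟨q, f ∘ₗ q.subtype⟩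
  have hφψ : ∀ (x : φ.domain) (y : ψ.domain), (x : E) = y → φ x = ψ y := fun x y hxy =>
    (hf ⟨hxy ▸ x.2, y.2⟩).symm
  obtain ⟨g, hg⟩ := LinearMap.exists_extend (φ.sup ψ hφψ).toFun
  refine ⟨g, fun x hx => ?_, fun y hy => ?_⟩
  · have hφ := (φ.left_le_sup ψ hφψ).2 (x := ⟨x, hx⟩) (y := ⟨x, le_sup_left (b := q) hx⟩) rfl
    exact (LinearMap.congr_fun hg _).trans hφ.symm
  · have hψ := (φ.right_le_sup ψ hφψ).2 (x := ⟨y, hy⟩) (y := ⟨y, le_sup_right (a := p) hy⟩) rfl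
    exact sub_eq_zero.2 (hψ.trans (LinearMap.congr_fun hg _).symm)

section

variable {K V : Type*} [Field K] [CharZero K] [AddCommGroup V] [Module K V] [Module ℚ V] {n : ℕ}

theorem mem_ratLinSet_iff {U : Submodule ℚ (Fin n → ℚ)} {x : Fin n → V} :
    x ∈ ratLinSet K V U ↔ U ≤ LinearMap.ker ((Pi.basisFun ℚ (Fin n)).constr ℚ x) := by
  simp [ratLinSet, SetLike.le_def, Module.Basis.constr_apply_fintype, Rat.cast_smul_eq_qsmul]

theorem ratLinSet_add_ratLinSet (U₁ U₂ : Submodule ℚ (Fin n → ℚ)) :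
    ratLinSet K V U₁ + ratLinSet K V U₂ = ratLinSet K V (U₁ ⊓ U₂) := by
  let Φ := (Pi.basisFun ℚ (Fin n)).constr (M' := V) ℚ
  ext x
  simp only [Set.mem_add, mem_ratLinSet_iff]
  constructor
  · rintro ⟨y, hy, z, hz, rfl⟩ q ⟨hq₁, hq₂⟩
    rw [LinearMap.mem_ker, map_add, LinearMap.add_apply, hy hq₁, hz hq₂, add_zero]
  · intro hx
    obtain ⟨g, hg₁, hg₂⟩ := LinearMap.exists_le_ker_and_le_ker_sub hx
    refine ⟨Φ.symm g, by rwa [Φ.apply_symm_apply], Φ.symm (Φ x - g),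
      by rwa [Φ.apply_symm_apply], ?_⟩
    rw [← map_add, add_sub_cancel, LinearEquiv.symm_apply_apply]

end

/-- Let `K` be a field of characteristic zero and `V` a vector space
over `K`.  For subspaces `U₁, U₂ ⊆ ℚ^n` one has `N_{U₁} + N_{U₂} = N_{U₁ ∩ U₂}`
(pointwise sum of subsets of `V^n`).  In particular, the sum of two `ℚ`-linear
subspaces of `V^n` is again a `ℚ`-linear subspace of `V^n`. -/
theorem statement2 {K V : Type*} [Field K] [CharZero K] [AddCommGroup V] [Module K V]
    (n : ℕ) (U₁ U₂ : Submodule ℚ (Fin n → ℚ)) :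
    ratLinSet K V U₁ + ratLinSet K V U₂ = ratLinSet K V (U₁ ⊓ U₂)
    ∧ ∃ U₃ : Submodule ℚ (Fin n → ℚ),
        ratLinSet K V U₁ + ratLinSet K V U₂ = ratLinSet K V U₃ := by
  let _ : Module ℚ V := Module.compHom V (algebraMap ℚ K)
  have h := ratLinSet_add_ratLinSet (K := K) (V := V) U₁ U₂
  exact ⟨h, U₁ ⊓ U₂, h⟩
end

section
/- Let K be a field of characteristic zero, V a vector space over K, and L ⊆ V^n a K-linear subspace (the solution set of a finite system of homogeneous K-linear equations). Then there exists a unique maximal ℚ-linear subspace N_L contained in L; that is, N_L is a ℚ-linear subspace of V^n with N_L ⊆ L, and every ℚ-linear subspace of V^n contained in L is contained in N_L. -/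
/-!
A point `x ∈ V^n` of `N_U` satisfies `x_j = ∑_l c_{lj} x_l`, where `c` is the matrix of any
projection of `ℚ^n` with kernel `U`; its rows lie in the dot-product complement `U^⊥`. So a
`K`-linear relation `a` holds on `N_U` as soon as `a` annihilates `U^⊥`. Conversely, for
`p ∈ U^⊥` and `v ∈ V` the point `(p_j v)_j` lies in `N_U`. Hence, for `V ≠ 0`, `N_U ⊆ L` iff
`U^⊥` consists of rational solutions of the system, i.e. iff `Z^⊥ ⊆ U` where `Z` is the space of
rational solutions; so `N_{Z^⊥}` is the largest `ℚ`-linear subspace in `L`.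
-/

open Matrix

section DotPerp

variable {F ι : Type*} [Field F] [Fintype ι]

def dotPerp (U : Submodule F (ι → F)) : Submodule F (ι → F) :=
  LinearMap.BilinForm.orthogonal (dotProductBilin F F) U

theorem mem_dotPerp {U : Submodule F (ι → F)} {p : ι → F} :
    p ∈ dotPerp U ↔ ∀ q ∈ U, q ⬝ᵥ p = 0 :=
  Iff.rfl

theorem dotPerp_antitone : Antitone (dotPerp : Submodule F (ι → F) → _) :=
  fun _ _ h => LinearMap.BilinForm.orthogonal_le h

theorem dotPerp_dotPerp (U : Submodule F (ι → F)) : dotPerp (dotPerp U) = U :=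
  LinearMap.BilinForm.orthogonal_orthogonal
    ⟨fun v hv => dotProduct_eq_zero v hv, fun v hv => dotProduct_eq_zero v fun w => by
      simpa [dotProduct_comm] using hv w⟩
    (fun v w h => by simpa [dotProduct_comm] using h) U

end DotPerp

section RatLinSet

variable {K V : Type*} [Field K] [AddCommGroup V] [Module K V] {n r : ℕ}

theorem ratLinSet_antitone : Antitone (ratLinSet K V : Submodule ℚ (Fin n → ℚ) → _) :=
  fun _ _ h _ hx q hq => hx q (h hq)

variable [CharZero K]

def ratSolutions (k : Matrix (Fin r) (Fin n) K) : Submodule ℚ (Fin n → ℚ) :=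
  ((LinearMap.ker k.mulVecLin).restrictScalars ℚ).comap
    (LinearMap.compLeft (Algebra.linearMap ℚ K) (Fin n))

theorem mem_ratSolutions {k : Fin r → Fin n → K} {p : Fin n → ℚ} :
    p ∈ ratSolutions k ↔ ∀ i, k i ⬝ᵥ (fun j => (p j : K)) = 0 := by
  simp only [ratSolutions, Submodule.mem_comap, Submodule.restrictScalars_mem, LinearMap.mem_ker,
    funext_iff]
  rfl

theorem exists_eq_sum_smul_of_mem_ratLinSet {U : Submodule ℚ (Fin n → ℚ)} {x : Fin n → V}
    (hx : x ∈ ratLinSet K V U) :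
    ∃ c : Fin n → Fin n → ℚ, (∀ l, c l ∈ dotPerp U) ∧ ∀ j, x j = ∑ l, (c l j : K) • x l := by
  obtain ⟨W, hW⟩ := U.exists_isCompl
  refine ⟨LinearMap.toMatrix' (W.projection U hW.symm), fun l => mem_dotPerp.2 fun q hq => ?_,
    fun j => ?_⟩
  · have hPq : W.projection U hW.symm q = 0 :=
      (Submodule.projection_apply_eq_zero_iff hW.symm).2 hq
    rw [dotProduct_comm]
    exact congrFun ((LinearMap.toMatrix'_mulVec _ q).trans hPq) l
  · have h := hx _ (Submodule.sub_projection_mem hW.symm (Pi.single j 1))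
    simp only [Pi.sub_apply, Rat.cast_sub, sub_smul, Finset.sum_sub_distrib, sub_eq_zero,
      Pi.single_apply, apply_ite, Rat.cast_one, Rat.cast_zero, ite_smul, one_smul, zero_smul,
      Finset.sum_ite_eq', Finset.mem_univ, if_true] at h
    simpa [LinearMap.toMatrix'_apply] using h

theorem sum_smul_eq_zero_of_mem_ratLinSet {U : Submodule ℚ (Fin n → ℚ)} {x : Fin n → V}
    (hx : x ∈ ratLinSet K V U) {a : Fin n → K}
    (ha : ∀ p ∈ dotPerp U, a ⬝ᵥ (fun j => (p j : K)) = 0) :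
    ∑ j, a j • x j = 0 := by
  obtain ⟨c, hc, hx⟩ := exists_eq_sum_smul_of_mem_ratLinSet hx
  calc ∑ j, a j • x j = ∑ j, ∑ l, (a j * c l j) • x l := by
        simp_rw [mul_smul, ← Finset.smul_sum, ← hx]
    _ = ∑ l, (a ⬝ᵥ fun j => (c l j : K)) • x l := by
        rw [Finset.sum_comm]; simp_rw [dotProduct, Finset.sum_smul]
    _ = 0 := Finset.sum_eq_zero fun l _ => by rw [ha _ (hc l), zero_smul]

theorem smul_mem_ratLinSet {U : Submodule ℚ (Fin n → ℚ)} {p : Fin n → ℚ} (hp : p ∈ dotPerp U)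
    (v : V) : (fun j => (p j : K) • v) ∈ ratLinSet K V U := by
  intro q hq
  have h : ((q ⬝ᵥ p : ℚ) : K) • v = 0 := by rw [mem_dotPerp.1 hp q hq, Rat.cast_zero, zero_smul]
  simpa [dotProduct, Finset.sum_smul, mul_smul] using h

theorem mem_ratSolutions_of_smul_mem {k : Fin r → Fin n → K} {p : Fin n → ℚ} {v : V}
    (hv : v ≠ 0) (h : ∀ i, ∑ j, k i j • (p j : K) • v = 0) : p ∈ ratSolutions k := by
  refine mem_ratSolutions.2 fun i => ?_
  have hi : (k i ⬝ᵥ fun j => (p j : K)) • v = 0 := by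
    simpa [dotProduct, Finset.sum_smul, mul_smul] using h i
  exact (smul_eq_zero.1 hi).resolve_right hv

theorem ratLinSet_dotPerp_ratSolutions_subset (k : Fin r → Fin n → K) :
    ratLinSet K V (dotPerp (ratSolutions k)) ⊆ {x | ∀ i, ∑ j, k i j • x j = 0} :=
  fun _ hx i => sum_smul_eq_zero_of_mem_ratLinSet hx fun _ hp =>
    mem_ratSolutions.1 (dotPerp_dotPerp (ratSolutions k) ▸ hp) i

theorem ratLinSet_subset_ratLinSet_dotPerp_ratSolutions {k : Fin r → Fin n → K}
    {U : Submodule ℚ (Fin n → ℚ)} (hU : ratLinSet K V U ⊆ {x | ∀ i, ∑ j, k i j • x j = 0}) :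
    ratLinSet K V U ⊆ ratLinSet K V (dotPerp (ratSolutions k)) := by
  rcases subsingleton_or_nontrivial V with hV | hV
  · exact fun x _ q _ => Subsingleton.elim _ _
  obtain ⟨v, hv⟩ := exists_ne (0 : V)
  have hperp : dotPerp U ≤ ratSolutions k := fun p hp =>
    mem_ratSolutions_of_smul_mem hv (hU (smul_mem_ratLinSet hp v))
  apply ratLinSet_antitone
  simpa only [dotPerp_dotPerp] using dotPerp_antitone hperp

end RatLinSet

/-- Let `K` be a field of characteristic zero, `V` a vector space
over `K`, and `L ⊆ V^n` a `K`-linear subspace (the solution set of a finite system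
of homogeneous `K`-linear equations).  Then there exists a unique maximal `ℚ`-linear
subspace `N_L` contained in `L`: it is a `ℚ`-linear subspace of `V^n` contained in
`L`, and every `ℚ`-linear subspace of `V^n` contained in `L` is contained in it. -/
theorem statement3 {K V : Type*} [Field K] [CharZero K] [AddCommGroup V] [Module K V]
    (n r : ℕ) (k : Fin r → Fin n → K) (L : Set (Fin n → V))
    (hL : L = {x | ∀ i, ∑ j, k i j • x j = 0}) :
    ∃! N : Set (Fin n → V),
      (∃ U : Submodule ℚ (Fin n → ℚ), N = ratLinSet K V U) ∧ N ⊆ L ∧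
        ∀ U' : Submodule ℚ (Fin n → ℚ), ratLinSet K V U' ⊆ L → ratLinSet K V U' ⊆ N := by
  subst hL
  refine ⟨_, ⟨⟨_, rfl⟩, ratLinSet_dotPerp_ratSolutions_subset k,
    fun _ => ratLinSet_subset_ratLinSet_dotPerp_ratSolutions⟩, ?_⟩
  rintro N ⟨⟨U, rfl⟩, hUL, hmax⟩
  exact (ratLinSet_subset_ratLinSet_dotPerp_ratSolutions hUL).antisymm
    (hmax _ (ratLinSet_dotPerp_ratSolutions_subset k))
end

section
/- Let K be a field of characteristic zero, V a vector space over K, and L ⊆ V^{n+ℓ} a K-linear subspace. Let N_L denote the maximal ℚ-linear subspace of V^{n+ℓ} contained in L, and let N_{L(0)} denote the maximal ℚ-linear subspace of V^n contained in the fiber L(0) over 0 ∈ V^ℓ. Then N_{L(0)} = N_L(0), i.e. the maximal ℚ-linear subspace of L(0) equals the fiber over 0 of the maximal ℚ-linear subspace of L. -/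
/-- For a `ℚ`-subspace `U ⊆ ℚ^{n+ℓ}` (represented as a subspace of
`(Fin n → ℚ) × (Fin ℓ → ℚ)`), the `ℚ`-linear subspace
`N_U = {p ∈ V^{n+ℓ} : q·p = 0 for every q ∈ U}` of `V^{n+ℓ}`,
represented as a subset of `(Fin n → V) × (Fin ℓ → V)`. -/
def ratLinSet₂ (K V : Type*) [Field K] [AddCommGroup V] [Module K V]
    {n ℓ : ℕ} (U : Submodule ℚ ((Fin n → ℚ) × (Fin ℓ → ℚ))) :
    Set ((Fin n → V) × (Fin ℓ → V)) :=
  {p | ∀ q ∈ U, (∑ j, ((q.1 j : K)) • p.1 j) + ∑ s, ((q.2 s : K)) • p.2 s = 0}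

/-- Let `K` be a field of characteristic zero, `V` a vector space over
`K`, and `L ⊆ V^{n+ℓ}` a `K`-linear subspace.  Let `N_L` be the maximal `ℚ`-linear
subspace of `V^{n+ℓ}` contained in `L`, and `N_{L(0)}` the maximal `ℚ`-linear subspace
of `V^n` contained in the fiber `L(0)` over `0 ∈ V^ℓ`.  Then `N_{L(0)} = N_L(0)`:
the maximal `ℚ`-linear subspace of `L(0)` is the fiber over `0` of the maximal
`ℚ`-linear subspace of `L`. -/
theorem statement4 {K V : Type*} [Field K] [CharZero K] [AddCommGroup V] [Module K V]
    (n ℓ r : ℕ) (k : Fin r → Fin n → K) (k' : Fin r → Fin ℓ → K)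
    (L : Set ((Fin n → V) × (Fin ℓ → V)))
    (hL : L = {p | ∀ i, (∑ j, k i j • p.1 j) + (∑ s, k' i s • p.2 s) = 0})
    -- `NL` is the maximal `ℚ`-linear subspace of `V^{n+ℓ}` contained in `L`:
    (NL : Set ((Fin n → V) × (Fin ℓ → V)))
    (hNL_lin : ∃ U : Submodule ℚ ((Fin n → ℚ) × (Fin ℓ → ℚ)), NL = ratLinSet₂ K V U)
    (hNL_sub : NL ⊆ L)
    (hNL_max : ∀ U' : Submodule ℚ ((Fin n → ℚ) × (Fin ℓ → ℚ)),
      ratLinSet₂ K V U' ⊆ L → ratLinSet₂ K V U' ⊆ NL)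
    -- `NL0` is the maximal `ℚ`-linear subspace of `V^n` contained in the fiber `L(0)`:
    (NL0 : Set (Fin n → V))
    (hNL0_lin : ∃ U : Submodule ℚ (Fin n → ℚ), NL0 = ratLinSet K V U)
    (hNL0_sub : NL0 ⊆ {x | (x, (0 : Fin ℓ → V)) ∈ L})
    (hNL0_max : ∀ U' : Submodule ℚ (Fin n → ℚ),
      ratLinSet K V U' ⊆ {x | (x, (0 : Fin ℓ → V)) ∈ L} → ratLinSet K V U' ⊆ NL0) :
    NL0 = {x | (x, (0 : Fin ℓ → V)) ∈ NL} := by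
  obtain ⟨U, hU⟩ := hNL_lin
  obtain ⟨U₀, hU₀⟩ := hNL0_lin
  ext x
  constructor
  · intro hx
    -- The set `NL0 × {0}` is a ℚ-linear subspace contained in `L`, hence in `NL`.
    have hsub : ratLinSet₂ K V (U₀.prod ⊤) ⊆ L := by
      intro p hp
      have hp2 : p.2 = 0 := by
        funext s
        have h := hp (0, Pi.single s 1) ⟨U₀.zero_mem, trivial⟩
        simpa [Pi.single_apply, apply_ite, ite_smul] using h
      have hp1 : p.1 ∈ NL0 := by
        rw [hU₀]
        intro q hq
        have h := hp (q, 0) ⟨hq, trivial⟩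
        simpa using h
      have h := hNL0_sub hp1
      have hpe : p = (p.1, (0 : Fin ℓ → V)) := by rw [← hp2]
      rw [hpe]
      exact h
    have hmax := hNL_max _ hsub
    apply hmax
    intro q hq
    have hx1 : ∑ j, ((q.1 j : K)) • x j = 0 := by
      rw [hU₀] at hx
      exact hx q.1 hq.1
    simp [hx1]
  · intro hx
    apply hNL0_max (U.map (LinearMap.fst ℚ _ _))
    · intro y hy
      apply hNL_sub
      rw [hU]
      intro q hq
      have hy1 : ∑ j, ((q.1 j : K)) • y j = 0 :=
        hy q.1 (Submodule.mem_map.mpr ⟨q, hq, rfl⟩)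
      simp [hy1]
    · intro q' hq'
      obtain ⟨q, hq, rfl⟩ := Submodule.mem_map.mp hq'
      rw [hU] at hx
      have h := hx q hq
      simpa using h
end

section
/- Let K be a field of characteristic zero, V a vector space over K, L ⊆ V^{n+ℓ} a K-linear subspace, a ∈ pr(L) a point of the projection of L to the last ℓ coordinates, and p ∈ L(a) a point of the fiber. Let N_L be the maximal ℚ-linear subspace of L and N_L(0) its fiber over 0 ∈ V^ℓ. Then N_L(0) + p ⊆ L(a), and for every ℚ-linear subspace M ⊆ V^n with M + p ⊆ L(a) one has M + p ⊆ N_L(0) + p. In other words, N_L(0) + p is the maximal ℚ-affine subspace of L(a) containing p. -/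
/-- Let `K` be a field of characteristic zero, `V` a vector space over
`K`, `L ⊆ V^{n+ℓ}` a `K`-linear subspace, `a` a point of the projection of `L` to the
last `ℓ` coordinates, and `p` a point of the fiber `L(a)`.  Let `N_L` be the maximal
`ℚ`-linear subspace of `L` and `N_L(0)` its fiber over `0 ∈ V^ℓ`.  Then
`N_L(0) + p ⊆ L(a)`, and for every `ℚ`-linear subspace `M ⊆ V^n` with `M + p ⊆ L(a)`
one has `M + p ⊆ N_L(0) + p`; i.e. `N_L(0) + p` is the maximal `ℚ`-affine subspace
of `L(a)` containing `p`. -/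
theorem statement5 {K V : Type*} [Field K] [CharZero K] [AddCommGroup V] [Module K V]
    (n ℓ r : ℕ) (k : Fin r → Fin n → K) (k' : Fin r → Fin ℓ → K)
    (L : Set ((Fin n → V) × (Fin ℓ → V)))
    (hL : L = {q | ∀ i, (∑ j, k i j • q.1 j) + (∑ s, k' i s • q.2 s) = 0})
    (a : Fin ℓ → V) (p : Fin n → V) (hp : (p, a) ∈ L)
    -- `NL` is the maximal `ℚ`-linear subspace of `V^{n+ℓ}` contained in `L`:
    (NL : Set ((Fin n → V) × (Fin ℓ → V)))
    (hNL_lin : ∃ U : Submodule ℚ ((Fin n → ℚ) × (Fin ℓ → ℚ)), NL = ratLinSet₂ K V U)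
    (hNL_sub : NL ⊆ L)
    (hNL_max : ∀ U' : Submodule ℚ ((Fin n → ℚ) × (Fin ℓ → ℚ)),
      ratLinSet₂ K V U' ⊆ L → ratLinSet₂ K V U' ⊆ NL) :
    {y | ∃ x, (x, (0 : Fin ℓ → V)) ∈ NL ∧ y = x + p} ⊆ {x | (x, a) ∈ L}
    ∧ ∀ M : Submodule ℚ (Fin n → ℚ),
        {y | ∃ m ∈ ratLinSet K V M, y = m + p} ⊆ {x | (x, a) ∈ L} →
        {y | ∃ m ∈ ratLinSet K V M, y = m + p}
          ⊆ {y | ∃ x, (x, (0 : Fin ℓ → V)) ∈ NL ∧ y = x + p} := by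
  subst hL
  constructor
  · rintro y ⟨x, hx, rfl⟩
    intro i
    have h1 := hNL_sub hx i
    have h2 := hp i
    simp only [Pi.zero_apply, smul_zero, Finset.sum_const_zero, add_zero] at h1
    have : (∑ j, k i j • (x + p) j) + ∑ s, k' i s • a s
        = (∑ j, k i j • x j) + ((∑ j, k i j • p j) + ∑ s, k' i s • a s) := by
      simp only [Pi.add_apply, smul_add, Finset.sum_add_distrib]; abel
    rw [this, h1, h2, add_zero]
  · intro M hM
    rintro y ⟨m, hm, rfl⟩
    refine ⟨m, hNL_max (M.prod ⊤) ?_ ?_, rfl⟩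
    · rintro ⟨x, z⟩ hxz i
      have hx : x ∈ ratLinSet K V M := by
        intro q hq
        have := hxz (q, 0) ⟨hq, trivial⟩
        simpa using this
      have hz : z = 0 := by
        funext s
        have := hxz (0, Pi.single s 1) ⟨M.zero_mem, trivial⟩
        simpa [Pi.single_apply, apply_ite (Rat.cast : ℚ → K)] using this
      subst hz
      have hxa := hM ⟨x, hx, rfl⟩ i
      have hpa := hp i
      simp only [Pi.zero_apply, smul_zero, Finset.sum_const_zero, add_zero]
      have key : ∑ j, k i j • x j
          = ((∑ j, k i j • (x + p) j) + ∑ s, k' i s • a s)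
            - ((∑ j, k i j • p j) + ∑ s, k' i s • a s) := by
        simp only [Pi.add_apply, smul_add, Finset.sum_add_distrib]; abel
      rw [key, hxa, hpa, sub_zero]
    · rintro q ⟨hq1, -⟩
      have := hm q.1 hq1
      simpa using this
end

section
/- Let U ⊆ ℚ^n be a ℚ-subspace and let N_U := {z ∈ ℂ^n : q₁z₁ + ⋯ + qₙzₙ = 0 for every q ∈ U}. Then the image of N_U under the coordinatewise complex exponential map exp : ℂ^n → (ℂ^×)^n equals the set {y ∈ (ℂ^×)^n : y₁^{m₁} ⋯ yₙ^{mₙ} = 1 for every m = (m₁,…,mₙ) ∈ U ∩ ℤ^n}. In particular, exp(N_U) is a subgroup of the multiplicative group (ℂ^×)^n. -/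
/-!
Let `L = U ∩ ℤⁿ`. Since `U` is a `ℚ`-subspace, `ℤⁿ ⧸ L` is torsion-free, hence free, so every
`ℤ`-linear map on `L` extends to `ℤⁿ`. Given `y` with `yᵐ = 1` on `L`, pick any logarithms `wᵢ`
of the `yᵢ`: the map `m ↦ ∑ mᵢ wᵢ` sends `L` into `2πiℤ = ker exp`. Subtracting an extension
`g : ℤⁿ → 2πiℤ` of it gives `zᵢ = wᵢ - g(eᵢ)` with `exp z = y` and `∑ mᵢ zᵢ = 0` on `L`, and
clearing denominators extends this to all of `U`.
-/

open Complex Finset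
open scoped Real

namespace Submodule

variable {R M N : Type*} [Ring R] [AddCommGroup M] [Module R M] [AddCommGroup N] [Module R N]

theorem exists_extend_of_projective_quotient (p : Submodule R M) [Module.Projective R (M ⧸ p)]
    (f : p →ₗ[R] N) : ∃ g : M →ₗ[R] N, g ∘ₗ p.subtype = f := by
  obtain ⟨s, hs⟩ := p.mkQ.exists_rightInverse_of_surjective p.range_mkQ
  have hretract (x : M) : x - s (p.mkQ x) ∈ p := by
    rw [← Quotient.mk_eq_zero, ← mkQ_apply, map_sub, ← LinearMap.comp_apply, hs,
      LinearMap.id_apply, sub_self]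
  refine ⟨f ∘ₗ (LinearMap.id - s ∘ₗ p.mkQ).codRestrict p hretract, ?_⟩
  refine LinearMap.ext fun x => congrArg f (Subtype.ext ?_)
  simp [(Quotient.mk_eq_zero p).mpr x.2]

theorem isTorsionFree_quotient {R M : Type*} [CommRing R] [IsDomain R] [AddCommGroup M]
    [Module R M] (p : Submodule R M) (hp : ∀ r : R, r ≠ 0 → ∀ x : M, r • x ∈ p → x ∈ p) :
    Module.IsTorsionFree R (M ⧸ p) := by
  refine .of_smul_eq_zero fun r q hrq => or_iff_not_imp_left.mpr fun hr => ?_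
  induction q using Quotient.induction_on with
  | _ x =>
    rw [← Quotient.mk_smul] at hrq
    rw [Quotient.mk_eq_zero] at hrq ⊢
    exact hp r hr x hrq

variable {ι : Type*}

def integralPoints (U : Submodule ℚ (ι → ℚ)) : Submodule ℤ (ι → ℤ) :=
  (U.restrictScalars ℤ).comap ((Int.castAddHom ℚ).toIntLinearMap.compLeft ι)

theorem mem_integralPoints {U : Submodule ℚ (ι → ℚ)} {m : ι → ℤ} :
    m ∈ U.integralPoints ↔ (fun i => (m i : ℚ)) ∈ U := Iff.rfl

instance isTorsionFree_quotient_integralPoints (U : Submodule ℚ (ι → ℚ)) :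
    Module.IsTorsionFree ℤ ((ι → ℤ) ⧸ U.integralPoints) := by
  refine U.integralPoints.isTorsionFree_quotient fun c hc m hcm => ?_
  rw [mem_integralPoints] at hcm ⊢
  have : (fun i => ((c • m) i : ℚ)) = (c : ℚ) • fun i => (m i : ℚ) := by
    ext i; simp
  rwa [this, U.smul_mem_iff (by exact_mod_cast hc)] at hcm

theorem exists_smul_eq_integralPoint [Fintype ι] {U : Submodule ℚ (ι → ℚ)} {q : ι → ℚ}
    (hq : q ∈ U) : ∃ d : ℤ, d ≠ 0 ∧ ∃ m ∈ U.integralPoints, (fun i => (m i : ℚ)) = (d : ℚ) • q := by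
  obtain ⟨⟨d, hd⟩, hdq⟩ :=
    IsLocalization.exist_integer_multiples (nonZeroDivisors ℤ) (S := ℚ) univ q
  choose m hm using fun i => hdq i (mem_univ i)
  have hm' : (fun i => (m i : ℚ)) = (d : ℚ) • q := by
    ext i; simpa using hm i
  refine ⟨d, nonZeroDivisors.ne_zero hd, m, ?_, hm'⟩
  rw [mem_integralPoints, hm']
  exact U.smul_mem _ hq

end Submodule

variable {ι : Type*} [Fintype ι]

theorem Complex.exp_eq_one_iff_mem_span {x : ℂ} :
    exp x = 1 ↔ x ∈ Submodule.span ℤ {2 * π * I} := by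
  simp [exp_eq_one_iff, Submodule.mem_span_singleton, eq_comm]

theorem Complex.prod_exp_zpow (z : ι → ℂ) (m : ι → ℤ) :
    ∏ i, exp (z i) ^ m i = exp (∑ i, (m i : ℂ) * z i) := by
  simp [exp_sum, exp_int_mul]

theorem exists_exp_eq_of_prod_zpow_eq_one [DecidableEq ι] (L : Submodule ℤ (ι → ℤ))
    [Module.Projective ℤ ((ι → ℤ) ⧸ L)] {y : ι → ℂ} (hy : ∀ i, y i ≠ 0)
    (h : ∀ m ∈ L, ∏ i, y i ^ m i = 1) :
    ∃ z : ι → ℂ, (∀ i, exp (z i) = y i) ∧ ∀ m ∈ L, ∑ i, (m i : ℂ) * z i = 0 := by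
  set K := Submodule.span ℤ {2 * π * I}
  set w : ι → ℂ := fun i => log (y i)
  set f := Fintype.linearCombination ℤ w
  have hf (m : ι → ℤ) : f m = ∑ i, (m i : ℂ) * w i := by
    simp [f, Fintype.linearCombination_apply, zsmul_eq_mul]
  have hfK (m : L) : f m ∈ K := by
    rw [← exp_eq_one_iff_mem_span, hf, ← prod_exp_zpow]
    simpa [w, exp_log (hy _)] using h m m.2
  obtain ⟨g, hg⟩ := L.exists_extend_of_projective_quotient ((f ∘ₗ L.subtype).codRestrict K hfK)
  set ψ := f - K.subtype ∘ₗ g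
  have hψ (m : ι → ℤ) : ψ m = ∑ i, (m i : ℂ) * ψ (Pi.single i 1) := by
    conv_lhs => rw [← univ_sum_single m]
    rw [map_sum]
    refine sum_congr rfl fun i _ => ?_
    rw [← zsmul_eq_mul, ← map_zsmul, ← Pi.single_smul', smul_eq_mul, mul_one]
  refine ⟨fun i => ψ (Pi.single i 1), fun i => ?_, fun m hm => ?_⟩
  · have hgK : exp (g (Pi.single i 1)) = 1 := exp_eq_one_iff_mem_span.mpr (g _).2
    simp [ψ, hf, exp_sub, hgK, w, exp_log (hy i), Pi.single_apply]
  · have hgm : (g m : ℂ) = f m := congrArg Subtype.val (LinearMap.congr_fun hg ⟨m, hm⟩)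
    rw [← hψ]
    simp [ψ, hgm]

theorem image_exp_annihilator_eq (U : Submodule ℚ (ι → ℚ)) :
    (fun z : ι → ℂ => fun i => exp (z i)) '' {z | ∀ q ∈ U, ∑ i, (q i : ℂ) * z i = 0} =
      {y | (∀ i, y i ≠ 0) ∧ ∀ m : ι → ℤ, (fun i => (m i : ℚ)) ∈ U → ∏ i, y i ^ m i = 1} := by
  classical
  ext y
  constructor
  · rintro ⟨z, hz, rfl⟩
    refine ⟨fun i => exp_ne_zero _, fun m hm => ?_⟩
    rw [prod_exp_zpow]
    simpa using congrArg exp (hz _ hm)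
  · rintro ⟨hy, h⟩
    obtain ⟨z, hexp, hz⟩ := exists_exp_eq_of_prod_zpow_eq_one U.integralPoints hy h
    refine ⟨z, fun q hq => ?_, funext hexp⟩
    obtain ⟨d, hd, m, hm, hmq⟩ := U.exists_smul_eq_integralPoint hq
    have hdq : (d : ℂ) * ∑ i, (q i : ℂ) * z i = ∑ i, (m i : ℂ) * z i := by
      rw [mul_sum]
      refine sum_congr rfl fun i _ => ?_
      have hi : ((m i : ℚ) : ℂ) = ((d * q i : ℚ) : ℂ) := congrArg _ (congrFun hmq i)
      push_cast at hi
      rw [hi, mul_assoc]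
    simpa [hd, hz m hm] using hdq

/-- Let `U ⊆ ℚ^n` be a `ℚ`-subspace and
`N_U = {z ∈ ℂ^n : q₁z₁ + ⋯ + qₙzₙ = 0 for every q ∈ U}`.  Then the image of `N_U`
under the coordinatewise complex exponential `exp : ℂ^n → (ℂ^×)^n` equals
`{y ∈ (ℂ^×)^n : y₁^{m₁} ⋯ yₙ^{mₙ} = 1 for every m ∈ U ∩ ℤ^n}`.
In particular, `exp(N_U)` is a subgroup of the multiplicative group `(ℂ^×)^n`
(it contains `1` and is closed under coordinatewise multiplication and inversion). -/
theorem statement7 (n : ℕ) (U : Submodule ℚ (Fin n → ℚ)) :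
    ((fun z : Fin n → ℂ => fun i => Complex.exp (z i)) ''
        {z : Fin n → ℂ | ∀ q ∈ U, ∑ i, (q i : ℂ) * z i = 0}
      = {y : Fin n → ℂ | (∀ i, y i ≠ 0) ∧
          ∀ m : Fin n → ℤ, (fun i => (m i : ℚ)) ∈ U → ∏ i, y i ^ m i = 1})
    ∧ (1 : Fin n → ℂ) ∈ (fun z : Fin n → ℂ => fun i => Complex.exp (z i)) ''
        {z : Fin n → ℂ | ∀ q ∈ U, ∑ i, (q i : ℂ) * z i = 0}
    ∧ (∀ y ∈ (fun z : Fin n → ℂ => fun i => Complex.exp (z i)) ''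
          {z : Fin n → ℂ | ∀ q ∈ U, ∑ i, (q i : ℂ) * z i = 0},
        ∀ y' ∈ (fun z : Fin n → ℂ => fun i => Complex.exp (z i)) ''
          {z : Fin n → ℂ | ∀ q ∈ U, ∑ i, (q i : ℂ) * z i = 0},
        y * y' ∈ (fun z : Fin n → ℂ => fun i => Complex.exp (z i)) ''
          {z : Fin n → ℂ | ∀ q ∈ U, ∑ i, (q i : ℂ) * z i = 0})
    ∧ (∀ y ∈ (fun z : Fin n → ℂ => fun i => Complex.exp (z i)) ''
          {z : Fin n → ℂ | ∀ q ∈ U, ∑ i, (q i : ℂ) * z i = 0},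
        y⁻¹ ∈ (fun z : Fin n → ℂ => fun i => Complex.exp (z i)) ''
          {z : Fin n → ℂ | ∀ q ∈ U, ∑ i, (q i : ℂ) * z i = 0}) := by
  refine ⟨image_exp_annihilator_eq U, ⟨0, fun q _ => by simp, by ext; simp⟩, ?_, ?_⟩
  · rintro _ ⟨z, hz, rfl⟩ _ ⟨z', hz', rfl⟩
    refine ⟨z + z', fun q hq => ?_, by ext; simp [exp_add]⟩
    simp [mul_add, sum_add_distrib, hz q hq, hz' q hq]
  · rintro _ ⟨z, hz, rfl⟩
    exact ⟨-z, fun q hq => by simp [hz q hq], by ext; simp [exp_neg]⟩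
end

section
/- Assume Schanuel's conjecture. Let K ⊆ ℂ be a subfield whose transcendence degree over ℚ is a finite number d. Then for any complex numbers x₁,…,xₙ: lin.dim_K(x₁,…,xₙ, 2πi) + tr.deg(exp x₁,…, exp xₙ) − lin.dim_ℚ(x₁,…,xₙ, 2πi) ≥ −(d+1). (This expresses that, relative to the kernel 2πiℤ of exp, the predimension of any finite set is bounded below by −(d+1).) -/
set_option synthInstance.maxHeartbeats 1000000

/-- The transcendence degree of an `F`-algebra `E`: the supremum of the cardinalities
of subsets of `E` that are algebraically independent over `F`. -/
noncomputable def trdeg (F E : Type*) [CommRing F] [CommRing E] [Algebra F E] : Cardinal :=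
  ⨆ s : {s : Set E // AlgebraicIndependent F ((↑) : s → E)}, Cardinal.mk s.1

/-- **Schanuel's conjecture**: for every `n` and all `ℚ`-linearly independent complex
numbers `z₁, …, zₙ`, the transcendence degree over `ℚ` of the field
`ℚ(z₁,…,zₙ, exp z₁,…, exp zₙ)` is at least `n`. -/
def SchanuelConjecture : Prop :=
  ∀ (n : ℕ) (z : Fin n → ℂ), LinearIndependent ℚ z →
    (n : Cardinal) ≤ trdeg ℚ ↥(IntermediateField.adjoin ℚ
      (Set.range z ∪ Set.range fun i => Complex.exp (z i)))

/-!
Choose a `K`-basis `b` of the `K`-span of `x₁, …, xₙ, 2πi` among these numbers and extend it to a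
`ℚ`-basis `z` of their `ℚ`-span. Each element of `z` is a `K`-linear combination of `b`, and
`exp (2πi) = 1`, so `ℚ(z, exp z)` lies in the field generated by `K`, `b` and the `exp xᵢ`.
Schanuel's conjecture then gives `|z| ≤ trdeg ℚ(z, exp z) ≤ d + |b| + trdeg ℚ(exp x)`.
Transcendence degrees of subfields of `ℂ` are handled as ranks in the algebraic matroid of `ℂ`
over `ℚ`, where the subadditivity needed is submodularity of the rank.
-/

open Cardinal Set AlgebraicIndependent Submodule

theorem Matroid.cRk_union_le {α : Type*} (M : Matroid α) [M.InvariantCardinalRank]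
    (X Y : Set α) : M.cRk (X ∪ Y) ≤ M.cRk X + M.cRk Y :=
  le_add_self.trans (M.cRk_inter_add_cRk_union_le X Y)

universe u

namespace AlgebraicIndependent

theorem cRk_range_eq_trdeg {R : Type*} {A A' : Type u} [CommRing R] [Nontrivial R] [CommRing A]
    [NoZeroDivisors A] [Algebra R A] [FaithfulSMul R A] [CommRing A'] [Algebra R A']
    (f : A' →ₐ[R] A) (hf : Function.Injective f) :
    (matroid R A).cRk (range f) = trdeg R A' := by
  refine le_antisymm (Matroid.cRk_le_iff.2 fun I hI => ?_) (ciSup_le' fun ⟨s, hs⟩ => ?_)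
  · choose g hg using fun i : I => hI.subset i.2
    refine AlgebraicIndependent.cardinalMk_le_trdeg (x := g) (.of_comp f ?_)
    rw [show f ∘ g = ((↑) : I → A) from funext hg]
    exact hI.indep
  · rw [← mk_image_eq hf]
    exact Matroid.Indep.cardinalMk_le_cRk_of_subset
      ((algebraicIndependent_image hf.injOn).1 (hs.map' hf)) (image_subset_range f s)

variable {F E : Type*} [Field F] [Field E] [Algebra F E]

theorem coe_adjoin_subset_matroid_closure (X : Set E) :
    (IntermediateField.adjoin F X : Set E) ⊆ (matroid F E).closure X := by
  intro y hy
  rw [matroid_closure_eq, SetLike.mem_coe, Subalgebra.mem_algebraicClosure,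
    ← IntermediateField.isAlgebraic_adjoin_iff]
  exact isAlgebraic_algebraMap (⟨y, hy⟩ : IntermediateField.adjoin F X)

theorem cRk_adjoin (X : Set E) :
    (matroid F E).cRk (IntermediateField.adjoin F X) = (matroid F E).cRk X :=
  le_antisymm
    (((matroid F E).cRk_mono (coe_adjoin_subset_matroid_closure X)).trans_eq
      ((matroid F E).cRk_closure X))
    ((matroid F E).cRk_mono (IntermediateField.subset_adjoin F X))

theorem trdeg_adjoin_eq_cRk (X : Set E) :
    trdeg F (IntermediateField.adjoin F X) = (matroid F E).cRk X := by
  rw [← cRk_adjoin, ← cRk_range_eq_trdeg _ (IntermediateField.adjoin F X).val.injective,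
    IntermediateField.coe_val, Subtype.range_coe]

end AlgebraicIndependent

theorem Subfield.coe_span_subset_adjoin {E : Type*} [Field E] [CharZero E] (K : Subfield E)
    (S : Set E) : (span K S : Set E) ⊆ IntermediateField.adjoin ℚ (K ∪ S) := by
  intro x hx
  induction hx using span_induction with
  | mem y hy => exact IntermediateField.subset_adjoin ℚ _ (Or.inr hy)
  | zero => exact zero_mem _
  | add y w _ _ hy hw => exact add_mem hy hw
  | smul c y _ hy => exact mul_mem (IntermediateField.subset_adjoin ℚ _ (Or.inl c.2)) hy

theorem Subfield.cRk_eq_trdeg {E : Type u} [Field E] [CharZero E] (K : Subfield E) :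
    (matroid ℚ E).cRk K = trdeg ℚ K := by
  have h := cRk_range_eq_trdeg K.subtype.toRatAlgHom K.subtype_injective
  rwa [show range K.subtype.toRatAlgHom = K from Subtype.range_coe] at h

theorem SchanuelConjecture.cardinalMk_le_cRk (hSch : SchanuelConjecture) {z : Set ℂ}
    (hz : z.Finite) (hli : LinearIndepOn ℚ id z) :
    #z ≤ (matroid ℚ ℂ).cRk (z ∪ Complex.exp '' z) := by
  have := hz.to_subtype
  let f : Fin (Nat.card z) → ℂ := (↑) ∘ (Finite.equivFin z).symm
  have hf : range f = z := by
    rw [range_comp, (Finite.equivFin z).symm.range_eq_univ, image_univ, Subtype.range_coe]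
  have hexp : (range fun i => Complex.exp (f i)) = Complex.exp '' z := by
    simp only [← hf, ← range_comp]; rfl
  calc #z = Nat.card z := Nat.cast_card.symm
    _ ≤ trdeg ℚ (IntermediateField.adjoin ℚ (range f ∪ range fun i => Complex.exp (f i))) :=
      hSch _ f (hli.comp _ (Finite.equivFin z).symm.injective)
    -- not by `rw`: the `ℚ`-algebra structure here is `DivisionRing.toRatAlgebra`, which agrees
    -- with the intermediate field's only up to unfolding
    _ = (matroid ℚ ℂ).cRk (z ∪ Complex.exp '' z) :=
      (trdeg_adjoin_eq_cRk _).trans (by rw [hexp, hf])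

theorem SchanuelConjecture.rank_span_rat_le (hSch : SchanuelConjecture) (K : Subfield ℂ)
    {g Y : Set ℂ} (hg : g.Finite) (hY : Complex.exp '' g ⊆ IntermediateField.adjoin ℚ Y) :
    Module.rank ℚ (span ℚ g) ≤ trdeg ℚ K + Module.rank K (span K g) + (matroid ℚ ℂ).cRk Y := by
  obtain ⟨b, hbg, hb_span, hb_li⟩ := exists_linearIndependent K g
  have hb_liQ : LinearIndepOn ℚ id b := hb_li.restrict_scalars' ℚ
  set z := hb_liQ.extend hbg
  have hzg : z ⊆ g := hb_liQ.extend_subset hbg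
  have hz_li : LinearIndepOn ℚ id z := hb_liQ.linearIndepOn_extend hbg
  rw [← hb_liQ.span_extend_eq_span hbg, rank_span_set hz_li, ← hb_span, rank_span_set hb_li]
  have hgens : z ∪ Complex.exp '' z ⊆ IntermediateField.adjoin ℚ (K ∪ b ∪ Y) := by
    refine union_subset (fun w hw => ?_) ((image_mono hzg).trans (hY.trans ?_))
    · have hw' : w ∈ span K b := hb_span ▸ subset_span (hzg hw)
      exact IntermediateField.adjoin.mono ℚ _ _ subset_union_left
        (K.coe_span_subset_adjoin b hw')
    · exact IntermediateField.adjoin.mono ℚ _ _ subset_union_right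
  set M := matroid ℚ ℂ
  calc #z ≤ M.cRk (z ∪ Complex.exp '' z) := hSch.cardinalMk_le_cRk (hg.subset hzg) hz_li
    _ ≤ M.cRk (IntermediateField.adjoin ℚ (K ∪ b ∪ Y)) := M.cRk_mono hgens
    _ = M.cRk (K ∪ b ∪ Y) := cRk_adjoin _
    _ ≤ M.cRk K + M.cRk b + M.cRk Y :=
      (M.cRk_union_le _ _).trans (add_le_add_left (M.cRk_union_le _ _) _)
    _ ≤ trdeg ℚ K + #b + M.cRk Y := by
      rw [K.cRk_eq_trdeg]
      gcongr
      exact M.cRk_le_cardinalMk b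

/-- Assume Schanuel's conjecture.  Let `K ⊆ ℂ` be a subfield whose
transcendence degree over `ℚ` is a finite number `d`.  Then for any complex
numbers `x₁, …, xₙ`:
`lin.dim_K(x₁,…,xₙ,2πi) + tr.deg(exp x₁,…, exp xₙ) − lin.dim_ℚ(x₁,…,xₙ,2πi) ≥ −(d+1)`
(an inequality of integers; the transcendence degree of the finitely generated field
`ℚ(exp x₁,…,exp xₙ)` is finite, so it is taken as a natural number via `Cardinal.toNat`).
This expresses that, relative to the kernel `2πiℤ` of `exp`, the predimension of any
finite set is bounded below by `−(d+1)`. -/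
theorem statement10 (hSch : SchanuelConjecture) (K : Subfield ℂ) (d : ℕ)
    (hK : trdeg ℚ K = d) (n : ℕ) (x : Fin n → ℂ) :
    ((Module.finrank K ↥(Submodule.span K
          (Set.range x ∪ {2 * (Real.pi : ℂ) * Complex.I})) : ℤ)
        + ((trdeg ℚ ↥(IntermediateField.adjoin ℚ
            (Set.range fun i => Complex.exp (x i)))).toNat : ℤ)
        - (Module.finrank ℚ ↥(Submodule.span ℚ
          (Set.range x ∪ {2 * (Real.pi : ℂ) * Complex.I})) : ℤ))
      ≥ -((d : ℤ) + 1) := by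
  set g := range x ∪ {2 * (Real.pi : ℂ) * Complex.I}
  set Y := range fun i => Complex.exp (x i)
  have hg : g.Finite := (finite_range x).union (finite_singleton _)
  have hY : Complex.exp '' g ⊆ IntermediateField.adjoin ℚ Y := by
    rintro _ ⟨w, ⟨i, rfl⟩ | rfl, rfl⟩
    · exact IntermediateField.subset_adjoin ℚ Y ⟨i, rfl⟩
    · rw [Complex.exp_two_pi_mul_I]; exact one_mem _
  have hd : trdeg ℚ K < ℵ₀ := hK ▸ natCast_lt_aleph0
  have hrankK : Module.rank K (span K g) < ℵ₀ := (rank_span_le g).trans_lt hg.lt_aleph0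
  have hrankY : (matroid ℚ ℂ).cRk Y < ℵ₀ :=
    ((matroid ℚ ℂ).cRk_le_cardinalMk Y).trans_lt (finite_range _).lt_aleph0
  have key := toNat_le_toNat (hSch.rank_span_rat_le K hg hY)
    (add_lt_aleph0 (add_lt_aleph0 hd hrankK) hrankY)
  rw [toNat_add (add_lt_aleph0 hd hrankK) hrankY, toNat_add hd hrankK, hK,
    toNat_natCast] at key
  have hT : trdeg ℚ (IntermediateField.adjoin ℚ Y) = (matroid ℚ ℂ).cRk Y := trdeg_adjoin_eq_cRk Y
  rw [hT]
  unfold Module.finrank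
  omega
end

section
/- Let d ≥ 1, R > 0, m ∈ ℕ, and let H₁, …, H_m be affine hyperplanes in ℝ^d. Then every closed ball of radius 2^m·R in ℝ^d contains an open ball of radius R that is disjoint from H₁ ∪ ⋯ ∪ H_m. -/
open scoped RealInnerProductSpace

lemma aux12 (d : ℕ) (R : ℝ) (hR : 0 < R) :
    ∀ (m : ℕ) (H : Fin m → Set (EuclideanSpace ℝ (Fin d))),
    (∀ i, ∃ (u : EuclideanSpace ℝ (Fin d)) (c : ℝ), u ≠ 0 ∧ H i = {x | ⟪u, x⟫ = c}) →
    ∀ x₀ : EuclideanSpace ℝ (Fin d), ∃ y,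
      Metric.ball y R ⊆ Metric.ball x₀ (2 ^ m * R)
      ∧ Disjoint (Metric.ball y R) (⋃ i, H i) := by
  intro m
  induction m with
  | zero =>
    intro H _ x₀
    exact ⟨x₀, by simp, by simp⟩
  | succ m ih =>
    intro H hH x₀
    obtain ⟨u, c, hu, hH0⟩ := hH 0
    have hun : (0:ℝ) < ‖u‖ := norm_pos_iff.mpr hu
    set t : ℝ := ⟪u, x₀⟫ with ht
    set ε : ℝ := if c ≤ t then 1 else -1 with hε
    set x₁ : EuclideanSpace ℝ (Fin d) := x₀ + (ε * (2 ^ m * R / ‖u‖)) • u with hx₁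
    have hεabs : |ε| = 1 := by rw [hε]; split <;> simp
    have hpos : (0:ℝ) < 2 ^ m * R := by positivity
    have hdist : dist x₁ x₀ = 2 ^ m * R := by
      rw [hx₁, dist_eq_norm, add_sub_cancel_left, norm_smul]
      rw [Real.norm_eq_abs, abs_mul, hεabs, one_mul, abs_of_pos (by positivity)]
      field_simp
    obtain ⟨y, hy1, hy2⟩ := ih (fun i => H i.succ) (fun i => hH i.succ) x₁
    have hsub : Metric.ball x₁ (2 ^ m * R) ⊆ Metric.ball x₀ (2 ^ (m+1) * R) := by
      apply Metric.ball_subset_ball'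
      rw [hdist, pow_succ]; nlinarith
    have hinner1 : ⟪u, x₁⟫ = t + ε * (2 ^ m * R) * ‖u‖ := by
      rw [hx₁, inner_add_right, real_inner_smul_right, real_inner_self_eq_norm_sq, ← ht]
      field_simp
    have hkey : ∀ x ∈ Metric.ball x₁ (2 ^ m * R), ⟪u, x⟫ ≠ c := by
      intro x hx hc
      have h1 : |⟪u, x - x₁⟫| < ‖u‖ * (2 ^ m * R) := by
        calc |⟪u, x - x₁⟫| ≤ ‖u‖ * ‖x - x₁‖ := abs_real_inner_le_norm u (x - x₁)
        _ < ‖u‖ * (2 ^ m * R) := by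
            apply mul_lt_mul_of_pos_left _ hun
            rw [← dist_eq_norm]; exact hx
      have h2 : ⟪u, x - x₁⟫ = c - ⟪u, x₁⟫ := by rw [inner_sub_right, hc]
      have h3 : |c - ⟪u, x₁⟫| ≥ ‖u‖ * (2 ^ m * R) := by
        rw [hinner1]
        rcases le_or_gt c t with h | h
        · have : ε = 1 := by rw [hε, if_pos h]
          rw [this]
          have : c - (t + 1 * (2 ^ m * R) * ‖u‖) ≤ -(‖u‖ * (2 ^ m * R)) := by nlinarith
          calc ‖u‖ * (2 ^ m * R) ≤ -(c - (t + 1 * (2 ^ m * R) * ‖u‖)) := by linarith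
          _ ≤ |c - (t + 1 * (2 ^ m * R) * ‖u‖)| := neg_le_abs _
        · have : ε = -1 := by rw [hε, if_neg (not_le.mpr h)]
          rw [this]
          have : c - (t + (-1) * (2 ^ m * R) * ‖u‖) ≥ ‖u‖ * (2 ^ m * R) := by nlinarith
          calc ‖u‖ * (2 ^ m * R) ≤ c - (t + (-1) * (2 ^ m * R) * ‖u‖) := this
          _ ≤ |c - (t + (-1) * (2 ^ m * R) * ‖u‖)| := le_abs_self _
      rw [h2] at h1
      linarith
    refine ⟨y, hy1.trans hsub, ?_⟩
    rw [Set.disjoint_right]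
    intro x hxH hxb
    rw [Set.mem_iUnion] at hxH
    obtain ⟨i, hi⟩ := hxH
    rcases Fin.eq_zero_or_eq_succ i with rfl | ⟨j, rfl⟩
    · rw [hH0] at hi
      exact hkey x (hy1 hxb) hi
    · have := Set.disjoint_right.mp hy2 (Set.mem_iUnion.mpr ⟨j, hi⟩)
      exact this hxb

/-- Let `d ≥ 1`, `R > 0`, `m ∈ ℕ`, and let `H₁, …, H_m` be affine
hyperplanes in `ℝ^d` (sets of the form `{x : ⟪u,x⟫ = c}` with `u ≠ 0`).  Then every
closed ball of radius `2^m · R` in `ℝ^d` contains an open ball of radius `R` that is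
disjoint from `H₁ ∪ ⋯ ∪ H_m`. -/
theorem statement12 (d : ℕ) (hd : 1 ≤ d) (R : ℝ) (hR : 0 < R) (m : ℕ)
    (H : Fin m → Set (EuclideanSpace ℝ (Fin d)))
    (hH : ∀ i, ∃ (u : EuclideanSpace ℝ (Fin d)) (c : ℝ), u ≠ 0 ∧
      H i = {x | ⟪u, x⟫ = c}) :
    ∀ x₀ : EuclideanSpace ℝ (Fin d), ∃ y : EuclideanSpace ℝ (Fin d),
      Metric.ball y R ⊆ Metric.closedBall x₀ (2 ^ m * R)
      ∧ Disjoint (Metric.ball y R) (⋃ i, H i) := by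
  intro x₀
  obtain ⟨y, h1, h2⟩ := aux12 d R hR m H hH x₀
  exact ⟨y, h1.trans Metric.ball_subset_closedBall, h2⟩
end
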